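/- arXiv:2511.15278 — 2 statements merged into one kernel-verified Lean document; each statement's English description precedes it below -/
import Mathlib

section
/- Under the encoding x'_i = |q_min| + ⌊x_i·k⌋ with Q > n·q, if the server computes the modular sum of all shares, divides by n, and decodes, the computed average â satisfies |(Σ_{i=1}^n x_i)/n - â| < 1/k. -/
/-- Theorem 1 of the paper: with encoding `x'_i = |q_min| + ⌊x_i·k⌋` and
additive secret sharing over `ZMod Q` with `Q > n·q`, the server's computed
average (modular sum of all shares, divided by `n`, then decoded) is within
`1/k` of the true average. -/
theorem secret_sharing_average_accuracy
    (k : ℝ) (hk : 0 < k) (D : Set ℝ)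
    (n : ℕ) (hn : 0 < n) (x : Fin n → ℝ) (hx : ∀ i, x i ∈ D)
    (qmin qmax : ℤ)
    (hqmin : IsLeast {z : ℤ | ∃ y ∈ D, z = ⌊y * k⌋} qmin)
    (hqmax : IsGreatest {z : ℤ | ∃ y ∈ D, z = ⌊y * k⌋} qmax)
    (Q : ℕ) [NeZero Q] (hQ : (n : ℤ) * (|qmin| + qmax) < (Q : ℤ))
    (m : ℕ) (s : Fin n → Fin m → ZMod Q)
    (hs : ∀ i, ∑ j, s i j = ((|qmin| + ⌊x i * k⌋ : ℤ) : ZMod Q)) :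
    |(∑ i, x i) / n -
        (((∑ i, ∑ j, s i j).val : ℝ) / n - ((|qmin| : ℤ) : ℝ)) / k| < 1 / k := by
  set S : ℤ := ∑ i, (|qmin| + ⌊x i * k⌋) with hS
  have hlb : ∀ i, qmin ≤ ⌊x i * k⌋ := fun i => hqmin.2 ⟨x i, hx i, rfl⟩
  have hub : ∀ i, ⌊x i * k⌋ ≤ qmax := fun i => hqmax.2 ⟨x i, hx i, rfl⟩
  have hS0 : 0 ≤ S := Finset.sum_nonneg fun i _ => by
    have := hlb i
    have := neg_abs_le qmin
    omega
  have hSQ : S < (Q : ℤ) := by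
    calc S ≤ ∑ _i : Fin n, (|qmin| + qmax) :=
          Finset.sum_le_sum fun i _ => by have := hub i; omega
      _ = (n : ℤ) * (|qmin| + qmax) := by
          simp [Finset.sum_const]
      _ < (Q : ℤ) := hQ
  have hsum : (∑ i, ∑ j, s i j) = ((S : ℤ) : ZMod Q) := by
    rw [hS, Int.cast_sum]
    exact Finset.sum_congr rfl fun i _ => hs i
  have hval : (((∑ i, ∑ j, s i j).val : ℤ)) = S := by
    rw [hsum]
    have h1 : ((S : ℤ) : ZMod Q) = ((S.toNat : ℕ) : ZMod Q) := by
      rw [← Int.cast_natCast, Int.toNat_of_nonneg hS0]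
    rw [h1, ZMod.val_natCast, Nat.mod_eq_of_lt]
    · omega
    · omega
  -- Real arithmetic
  have hvalR : (((∑ i, ∑ j, s i j).val : ℝ)) = (S : ℝ) := by
    exact_mod_cast congrArg (fun z : ℤ => (z : ℝ)) hval
  rw [hvalR]
  have hSR : (S : ℝ) = n * ((|qmin| : ℤ) : ℝ) + ∑ i, ((⌊x i * k⌋ : ℤ) : ℝ) := by
    rw [hS]
    push_cast
    rw [Finset.sum_add_distrib]
    simp [Finset.sum_const, mul_comm]
  set A : ℝ := ∑ i, x i with hA
  set F : ℝ := ∑ i, ((⌊x i * k⌋ : ℤ) : ℝ) with hF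
  have hnR : (0 : ℝ) < n := by exact_mod_cast hn
  have hFle : F ≤ A * k := by
    rw [hF, hA, Finset.sum_mul]
    exact Finset.sum_le_sum fun i _ => Int.floor_le _
  have hFgt : A * k < F + n := by
    rw [hF, hA, Finset.sum_mul]
    calc ∑ i, x i * k < ∑ i, (((⌊x i * k⌋ : ℤ) : ℝ) + 1) :=
          Finset.sum_lt_sum_of_nonempty (Finset.univ_nonempty_iff.mpr ⟨⟨0, hn⟩⟩)
            (fun i _ => Int.lt_floor_add_one _)
      _ = (∑ i, ((⌊x i * k⌋ : ℤ) : ℝ)) + n := by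
          rw [Finset.sum_add_distrib]; simp
  have key : A / n - ((S : ℝ) / n - ((|qmin| : ℤ) : ℝ)) / k = (A * k - F) / (n * k) := by
    rw [hSR]
    field_simp
    ring
  rw [key, abs_of_nonneg (div_nonneg (by linarith) (by positivity)), div_lt_div_iff₀ (by positivity) hk]
  nlinarith [hFgt, hFle]
end

section
/- In a (t,n) Shamir scheme over finite field F with uniformly random coefficients c_1, ..., c_{t-1}, any t-1 shares at distinct nonzero evaluation points are jointly uniform on F^{t-1} independently of the secret s; hence t-1 shares reveal no information about s. -/
/-- Shamir `(t,n)` secrecy: with coefficients `c_1, ..., c_{t-1}` i.i.d. uniform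
on a finite field `F` and polynomial `p(X) = s + Σ_j c_j X^j`, any `t-1` shares
at distinct nonzero evaluation points are jointly uniform on `F^{t-1}`,
independently of the secret `s`. -/
theorem shamir_secrecy (F : Type*) [Field F] [Fintype F] [DecidableEq F]
    (t : ℕ) (ht : 1 ≤ t)
    (α : Fin (t - 1) → F) (hinj : Function.Injective α) (hnz : ∀ i, α i ≠ 0)
    (s : F) :
    (PMF.uniformOfFintype (Fin (t - 1) → F)).map
        (fun c (i : Fin (t - 1)) => s + ∑ j : Fin (t - 1), c j * (α i) ^ ((j : ℕ) + 1)) =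
      PMF.uniformOfFintype (Fin (t - 1) → F) := by
  set f : (Fin (t - 1) → F) → (Fin (t - 1) → F) :=
    fun c (i : Fin (t - 1)) => s + ∑ j : Fin (t - 1), c j * (α i) ^ ((j : ℕ) + 1) with hf
  set M : Matrix (Fin (t - 1)) (Fin (t - 1)) F := fun i j => (α i) ^ ((j : ℕ) + 1) with hM
  have hMdet : IsUnit M.det := by
    have : M = Matrix.diagonal α * Matrix.vandermonde α := by
      ext i j
      simp [hM, Matrix.mul_apply, Matrix.diagonal_apply, Matrix.vandermonde,
        pow_succ, mul_comm]
    rw [this, Matrix.det_mul, Matrix.det_diagonal]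
    refine (IsUnit.mul ?_ ?_)
    · exact isUnit_iff_ne_zero.mpr (Finset.prod_ne_zero_iff.mpr fun i _ => hnz i)
    · exact isUnit_iff_ne_zero.mpr (Matrix.det_vandermonde_ne_zero_iff.mpr hinj)
  have hfeq : ∀ c, f c = fun i => s + M.mulVec c i := by
    intro c
    funext i
    simp [hf, hM, Matrix.mulVec, dotProduct, mul_comm]
  have hinjf : Function.Injective f := by
    intro c c' h
    have hm := Matrix.mulVec_injective_iff_isUnit.mpr ((Matrix.isUnit_iff_isUnit_det M).mpr hMdet)
    apply hm
    funext i
    have := congrFun (hfeq c ▸ hfeq c' ▸ h) i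
    simpa using this
  have hbij : Function.Bijective f := (Finite.injective_iff_bijective).mp hinjf
  let e : (Fin (t - 1) → F) ≃ (Fin (t - 1) → F) := Equiv.ofBijective f hbij
  ext x
  rw [PMF.map_apply]
  rw [tsum_eq_single (e.symm x) (by
    intro c hc
    rw [if_neg]
    intro hxc
    have : f c = f (e.symm x) := by rw [← hxc]; exact (e.apply_symm_apply x).symm
    exact hc (hinjf this))]
  have : x = f (e.symm x) := (e.apply_symm_apply x).symm
  rw [if_pos this]
  simp [PMF.uniformOfFintype_apply]
end
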